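/- arXiv:1802.05062 — 10 statements merged into one kernel-verified Lean document; each statement's English description precedes it below -/
import Mathlib

section
/- Under continuity and coercivity of the trilinear form, if u(a) and u(b) denote the unique solutions of the variational problems T(a,u(a),v) = m(v) and T(b,u(b),v) = m(v) for all v ∈ V, with a, b ∈ A, then ‖u(a) − u(b)‖ ≤ (β/α²)‖m‖·‖b − a‖; in particular the parameter-to-solution map is Lipschitz continuous on A. -/
/-- Under continuity and coercivity of the trilinear form, the
solutions `u(a)` and `u(b)` satisfy
`‖u(a) − u(b)‖ ≤ (β/α²) ‖m‖ ‖b − a‖`. -/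
theorem lipschitz_parameter_to_solution
    {B V : Type*} [NormedAddCommGroup B] [NormedSpace ℝ B]
    [NormedAddCommGroup V] [InnerProductSpace ℝ V]
    (A : Set B) (T : B → V → V → ℝ) (m : V →L[ℝ] ℝ)
    (α β : ℝ) (hα : 0 < α) (hβ : 0 < β)
    (hT1 : ∀ u v, IsLinearMap ℝ (fun a => T a u v))
    (hT2 : ∀ a v, IsLinearMap ℝ (fun u => T a u v))
    (hT3 : ∀ a u, IsLinearMap ℝ (fun v => T a u v))
    (hTsym : ∀ a u v, T a u v = T a v u)
    (hTb : ∀ (a : B) (u v : V), |T a u v| ≤ β * ‖a‖ * ‖u‖ * ‖v‖)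
    (hTc : ∀ a ∈ A, ∀ u : V, α * ‖u‖ ^ 2 ≤ T a u u)
    (a b : B) (ha : a ∈ A) (hb : b ∈ A)
    (ua ub : V)
    (hua : ∀ v : V, T a ua v = m v)
    (hub : ∀ v : V, T b ub v = m v) :
    ‖ua - ub‖ ≤ β / α ^ 2 * ‖m‖ * ‖b - a‖ := by
  set e := ua - ub with he
  have h1 : α * ‖e‖ ^ 2 ≤ T a e e := hTc a ha e
  have hsplit : T a e e = T a ua e - T a ub e := by
    simpa using (hT2 a e).map_sub ua ub
  have hTae : T a e e = T (b - a) ub e := by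
    rw [hsplit, hua e, ← hub e, (hT1 ub e).map_sub]
  have hbound : T (b - a) ub e ≤ β * ‖b - a‖ * ‖ub‖ * ‖e‖ :=
    le_trans (le_abs_self _) (hTb _ _ _)
  have hub2 : α * ‖ub‖ ^ 2 ≤ ‖m‖ * ‖ub‖ := by
    have := hTc b hb ub
    rw [hub ub] at this
    exact this.trans ((le_abs_self _).trans (m.le_opNorm ub))
  have hubn : α * ‖ub‖ ≤ ‖m‖ := by
    rcases eq_or_lt_of_le (norm_nonneg ub) with h | h
    · rw [← h, mul_zero]; exact norm_nonneg m
    · nlinarith [sq_nonneg ‖ub‖]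
  have h2 : α * ‖e‖ ^ 2 ≤ β * ‖b - a‖ * ‖ub‖ * ‖e‖ := by
    rw [hTae] at h1; linarith
  rcases eq_or_lt_of_le (norm_nonneg e) with h | h
  · rw [← h]
    positivity
  · rw [div_mul_eq_mul_div, div_mul_eq_mul_div, le_div_iff₀ (by positivity)]
    nlinarith [mul_le_mul_of_nonneg_left hubn (by positivity : (0:ℝ) ≤ β * ‖b - a‖ * ‖e‖),
      mul_le_mul_of_nonneg_left h2 hα.le, norm_nonneg (b - a), norm_nonneg ub, mul_pos hα h]
end

section
/- Under continuity and coercivity of the trilinear form, the solutions u(a), u(b) for a, b ∈ A satisfy the sharper stability estimate ‖u(a) − u(b)‖ ≤ (β/α)·min{‖u(a)‖, ‖u(b)‖}·‖b − a‖. -/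
private lemma aux_stability
    {B V : Type*} [NormedAddCommGroup B] [NormedSpace ℝ B]
    [NormedAddCommGroup V] [InnerProductSpace ℝ V]
    (A : Set B) (T : B → V → V → ℝ) (m : V →L[ℝ] ℝ)
    (α β : ℝ) (hα : 0 < α) (hβ : 0 < β)
    (hT1 : ∀ u v, IsLinearMap ℝ (fun a => T a u v))
    (hT2 : ∀ a v, IsLinearMap ℝ (fun u => T a u v))
    (hTb : ∀ (a : B) (u v : V), |T a u v| ≤ β * ‖a‖ * ‖u‖ * ‖v‖)
    (hTc : ∀ a ∈ A, ∀ u : V, α * ‖u‖ ^ 2 ≤ T a u u)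
    (a b : B) (ha : a ∈ A)
    (ua ub : V)
    (hua : ∀ v : V, T a ua v = m v)
    (hub : ∀ v : V, T b ub v = m v) :
    ‖ua - ub‖ ≤ β / α * ‖ub‖ * ‖b - a‖ := by
  set w := ua - ub with hw
  rcases eq_or_lt_of_le (norm_nonneg w) with h0 | h0
  · rw [← h0]
    positivity
  have key : α * ‖w‖ ^ 2 ≤ β * ‖b - a‖ * ‖ub‖ * ‖w‖ := by
    have e1 : T a w w = T a ua w - T a ub w := by
      have := (hT2 a w).map_sub ua ub
      simpa using this
    have e2 : T a ua w = T b ub w := by rw [hua, hub]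
    have e3 : T b ub w - T a ub w = T (b - a) ub w := by
      have := (hT1 ub w).map_sub b a
      linarith
    calc α * ‖w‖ ^ 2 ≤ T a w w := hTc a ha w
      _ = T (b - a) ub w := by rw [e1, e2, e3]
      _ ≤ β * ‖b - a‖ * ‖ub‖ * ‖w‖ := le_trans (le_abs_self _) (hTb _ _ _)
  have h1 : α * ‖w‖ ≤ β * ‖b - a‖ * ‖ub‖ := by nlinarith
  rw [div_mul_eq_mul_div, div_mul_eq_mul_div, le_div_iff₀ hα]
  nlinarith

/-- Under continuity and coercivity, the sharper stability
estimate `‖u(a) − u(b)‖ ≤ (β/α) min{‖u(a)‖, ‖u(b)‖} ‖b − a‖` holds. -/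
theorem sharp_stability_estimate
    {B V : Type*} [NormedAddCommGroup B] [NormedSpace ℝ B]
    [NormedAddCommGroup V] [InnerProductSpace ℝ V]
    (A : Set B) (T : B → V → V → ℝ) (m : V →L[ℝ] ℝ)
    (α β : ℝ) (hα : 0 < α) (hβ : 0 < β)
    (hT1 : ∀ u v, IsLinearMap ℝ (fun a => T a u v))
    (hT2 : ∀ a v, IsLinearMap ℝ (fun u => T a u v))
    (hT3 : ∀ a u, IsLinearMap ℝ (fun v => T a u v))
    (hTsym : ∀ a u v, T a u v = T a v u)
    (hTb : ∀ (a : B) (u v : V), |T a u v| ≤ β * ‖a‖ * ‖u‖ * ‖v‖)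
    (hTc : ∀ a ∈ A, ∀ u : V, α * ‖u‖ ^ 2 ≤ T a u u)
    (a b : B) (ha : a ∈ A) (hb : b ∈ A)
    (ua ub : V)
    (hua : ∀ v : V, T a ua v = m v)
    (hub : ∀ v : V, T b ub v = m v) :
    ‖ua - ub‖ ≤ β / α * min ‖ua‖ ‖ub‖ * ‖b - a‖ := by
  have h1 : ‖ua - ub‖ ≤ β / α * ‖ub‖ * ‖b - a‖ :=
    aux_stability A T m α β hα hβ hT1 hT2 hTb hTc a b ha ua ub hua hub
  have h2 : ‖ua - ub‖ ≤ β / α * ‖ua‖ * ‖b - a‖ := by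
    have := aux_stability A T m α β hα hβ hT1 hT2 hTb hTc b a hb ub ua hub hua
    rwa [norm_sub_rev ub, norm_sub_rev a] at this
  rcases min_cases ‖ua‖ ‖ub‖ with ⟨h, _⟩ | ⟨h, _⟩ <;> rw [h]
  exacts [h2, h1]
end

section
/- Let (ā, ū) belong to the graph of the set-valued solution map U. If (δa, δu) lies in the contingent cone to graph(U) at (ā, ū), then T(ā, δu, v) = −T(δa, ū, v) for every v ∈ V. -/
open Filter Topology

/-- If `(δa, δu)` lies in the contingent cone of the graph of the
set-valued solution map at `(ā, ū)`, then `T(ā, δu, v) = −T(δa, ū, v)` for all `v`. -/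
theorem contingent_derivative_characterization
    {B V : Type*} [NormedAddCommGroup B] [NormedSpace ℝ B]
    [NormedAddCommGroup V] [InnerProductSpace ℝ V]
    (T : B → V → V → ℝ) (m : V →L[ℝ] ℝ) (β : ℝ)
    (hT1 : ∀ u v, IsLinearMap ℝ (fun a => T a u v))
    (hT2 : ∀ a v, IsLinearMap ℝ (fun u => T a u v))
    (hT3 : ∀ a u, IsLinearMap ℝ (fun v => T a u v))
    (hTb : ∀ (a : B) (u v : V), |T a u v| ≤ β * ‖a‖ * ‖u‖ * ‖v‖)
    (abar : B) (ubar : V)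
    (hbar : ∀ v : V, T abar ubar v = m v)
    (δa : B) (δu : V)
    -- (δa, δu) belongs to the contingent cone of graph(U) at (ā, ū):
    (hcone : ∃ (t : ℕ → ℝ) (z : ℕ → B × V),
      (∀ n, 0 < t n) ∧ Tendsto t atTop (nhds 0) ∧
      Tendsto z atTop (nhds (δa, δu)) ∧
      (∀ n, ∀ v : V, T (abar + t n • (z n).1) (ubar + t n • (z n).2) v = m v)) :
    ∀ v : V, T abar δu v = -(T δa ubar v) := by
  intro v
  obtain ⟨t, z, htpos, ht0, hz, heq⟩ := hcone
  set a : ℕ → B := fun n => (z n).1 with ha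
  set u : ℕ → V := fun n => (z n).2 with hu
  have hza : Tendsto a atTop (nhds δa) := (continuous_fst.tendsto _).comp hz
  have hzu : Tendsto u atTop (nhds δu) := (continuous_snd.tendsto _).comp hz
  -- key identity for each n
  have key : ∀ n, T abar (u n) v + T (a n) ubar v + t n * T (a n) (u n) v = 0 := by
    intro n
    have h1 := heq n v
    have e1 : T (abar + t n • a n) (ubar + t n • u n) v
        = T abar ubar v + t n * T abar (u n) v + t n * T (a n) ubar v
          + t n * (t n * T (a n) (u n) v) := by
      have l1 := (hT1 (ubar + t n • u n) v)
      have l2u := (hT2 abar v)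
      have l2a := (hT2 (a n) v)
      rw [l1.map_add, l1.map_smul, l2u.map_add, l2u.map_smul, l2a.map_add, l2a.map_smul]
      simp [smul_eq_mul]; ring
    rw [e1, hbar v] at h1
    have h2 : t n * (T abar (u n) v + T (a n) ubar v + t n * T (a n) (u n) v) = 0 := by
      linarith [h1]
    have := (htpos n).ne'
    rcases mul_eq_zero.mp h2 with h | h
    · exact absurd h this
    · linarith [h]
  -- continuity of the linear pieces
  have cu : Tendsto (fun n => T abar (u n) v) atTop (nhds (T abar δu v)) := by
    have : Continuous (fun w : V => T abar w v) := by
      have := AddMonoidHomClass.continuous_of_bound (IsLinearMap.mk' _ (hT2 abar v))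
        (β * ‖abar‖ * ‖v‖) (fun w => by
          have := hTb abar w v
          calc ‖T abar w v‖ = |T abar w v| := rfl
            _ ≤ β * ‖abar‖ * ‖w‖ * ‖v‖ := this
            _ = β * ‖abar‖ * ‖v‖ * ‖w‖ := by ring)
      exact this
    exact (this.tendsto _).comp hzu
  have ca : Tendsto (fun n => T (a n) ubar v) atTop (nhds (T δa ubar v)) := by
    have : Continuous (fun w : B => T w ubar v) := by
      have := AddMonoidHomClass.continuous_of_bound (IsLinearMap.mk' _ (hT1 ubar v))
        (β * ‖ubar‖ * ‖v‖) (fun w => by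
          have := hTb w ubar v
          calc ‖T w ubar v‖ = |T w ubar v| := rfl
            _ ≤ β * ‖w‖ * ‖ubar‖ * ‖v‖ := this
            _ = β * ‖ubar‖ * ‖v‖ * ‖w‖ := by ring)
      exact this
    exact (this.tendsto _).comp hza
  have c3 : Tendsto (fun n => t n * T (a n) (u n) v) atTop (nhds 0) := by
    apply squeeze_zero_norm (a := fun n => |t n| * (β * ‖a n‖ * ‖u n‖ * ‖v‖))
    · intro n
      calc ‖t n * T (a n) (u n) v‖ = |t n| * |T (a n) (u n) v| := abs_mul _ _
        _ ≤ |t n| * (β * ‖a n‖ * ‖u n‖ * ‖v‖) :=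
          mul_le_mul_of_nonneg_left (hTb _ _ _) (abs_nonneg _)
    · have h0 : Tendsto (fun n => |t n|) atTop (nhds 0) := by
        simpa using ht0.abs
      have hb : Tendsto (fun n => β * ‖a n‖ * ‖u n‖ * ‖v‖) atTop
          (nhds (β * ‖δa‖ * ‖δu‖ * ‖v‖)) := by
        exact (((tendsto_const_nhds.mul hza.norm).mul hzu.norm).mul tendsto_const_nhds)
      simpa using h0.mul hb
  have hsum : Tendsto (fun n => T abar (u n) v + T (a n) ubar v + t n * T (a n) (u n) v)
      atTop (nhds (T abar δu v + T δa ubar v + 0)) := (cu.add ca).add c3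
  have hzero : Tendsto (fun n => T abar (u n) v + T (a n) ubar v + t n * T (a n) (u n) v)
      atTop (nhds (0 : ℝ)) := by
    simp only [key]; exact tendsto_const_nhds
  have := tendsto_nhds_unique hsum hzero
  linarith
end

section
/- Let (ā, ū) ∈ graph(U) and (δa, δu) ∈ C(graph(U), (ā, ū)). If (δã, δ²u) lies in the second-order contingent set C²(graph(U), (ā,ū), (δa,δu)), then T(ā, δ²u, v) = −2T(δa, δu, v) − T(δã, ū, v) for every v ∈ V. -/
open Filter Topology

/-- If `(δã, δ²u)` lies in the second-order contingent set of the
graph of the solution map at `(ā, ū)` in direction `(δa, δu)`, then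
`T(ā, δ²u, v) = −2T(δa, δu, v) − T(δã, ū, v)` for all `v`. -/
theorem second_order_contingent_derivative_characterization
    {B V : Type*} [NormedAddCommGroup B] [NormedSpace ℝ B]
    [NormedAddCommGroup V] [InnerProductSpace ℝ V]
    (T : B → V → V → ℝ) (m : V →L[ℝ] ℝ) (β : ℝ)
    (hT1 : ∀ u v, IsLinearMap ℝ (fun a => T a u v))
    (hT2 : ∀ a v, IsLinearMap ℝ (fun u => T a u v))
    (hT3 : ∀ a u, IsLinearMap ℝ (fun v => T a u v))
    (hTb : ∀ (a : B) (u v : V), |T a u v| ≤ β * ‖a‖ * ‖u‖ * ‖v‖)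
    (abar : B) (ubar : V)
    (hbar : ∀ v : V, T abar ubar v = m v)
    (δa : B) (δu : V)
    -- first-order characterization of the direction (δa, δu):
    (hfirst : ∀ v : V, T abar δu v = -(T δa ubar v))
    (δat : B) (δ2u : V)
    -- (δã, δ²u) belongs to the second-order contingent set of graph(U)
    -- at (ā, ū) in direction (δa, δu):
    (hcone2 : ∃ (t : ℕ → ℝ) (z : ℕ → B × V),
      (∀ n, 0 < t n) ∧ Tendsto t atTop (nhds 0) ∧
      Tendsto z atTop (nhds (δat, δ2u)) ∧
      (∀ n, ∀ v : V,
        T (abar + t n • δa + (t n ^ 2 / 2) • (z n).1)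
          (ubar + t n • δu + (t n ^ 2 / 2) • (z n).2) v = m v)) :
    ∀ v : V, T abar δ2u v = -(2 * T δa δu v) - T δat ubar v := by

  obtain ⟨t, z, htpos, ht, hz, hn⟩ := hcone2
  intro v
  -- continuity of T in the first and second arguments
  have cont1 : ∀ (u w : V), Continuous (fun a : B => T a u w) := by
    intro u w
    exact (LinearMap.mkContinuous (IsLinearMap.mk' _ (hT1 u w)) (β * ‖u‖ * ‖w‖)
      (fun a => by
        rw [Real.norm_eq_abs]
        calc |T a u w| ≤ β * ‖a‖ * ‖u‖ * ‖w‖ := hTb a u w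
          _ = β * ‖u‖ * ‖w‖ * ‖a‖ := by ring)).continuous
  have cont2 : ∀ (a : B) (w : V), Continuous (fun u : V => T a u w) := by
    intro a w
    exact (LinearMap.mkContinuous (IsLinearMap.mk' _ (hT2 a w)) (β * ‖a‖ * ‖w‖)
      (fun u => by
        rw [Real.norm_eq_abs]
        calc |T a u w| ≤ β * ‖a‖ * ‖u‖ * ‖w‖ := hTb a u w
          _ = β * ‖a‖ * ‖w‖ * ‖u‖ := by ring)).continuous
  have hz1 : Tendsto (fun n => (z n).1) atTop (nhds δat) :=
    (continuous_fst.tendsto _).comp hz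
  have hz2 : Tendsto (fun n => (z n).2) atTop (nhds δ2u) :=
    (continuous_snd.tendsto _).comp hz
  -- expansion lemmas
  have hA : ∀ (a a' : B) (u w : V), T (a + a') u w = T a u w + T a' u w :=
    fun a a' u w => (hT1 u w).map_add a a'
  have hAs : ∀ (c : ℝ) (a : B) (u w : V), T (c • a) u w = c * T a u w :=
    fun c a u w => (hT1 u w).map_smul c a
  have hU : ∀ (a : B) (u u' w : V), T a (u + u') w = T a u w + T a u' w :=
    fun a u u' w => (hT2 a w).map_add u u'
  have hUs : ∀ (c : ℝ) (a : B) (u w : V), T a (c • u) w = c * T a u w :=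
    fun c a u w => (hT2 a w).map_smul c u
  set g : ℕ → ℝ := fun n =>
    T abar (z n).2 v + T (z n).1 ubar v + 2 * T δa δu v
      + t n * T δa (z n).2 v + t n * T (z n).1 δu v
      + (t n ^ 2 / 2) * T (z n).1 (z n).2 v with hg
  have hg0 : ∀ n, g n = 0 := by
    intro n
    have hn' := hn n v
    simp only [hA, hAs, hU, hUs] at hn'
    have htn := htpos n
    have hs : t n ^ 2 / 2 ≠ 0 := by positivity
    have key : (t n ^ 2 / 2) * g n = 0 := by
      rw [hg]
      linear_combination hn' - hbar v - t n * hfirst v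
    exact (mul_eq_zero.mp key).resolve_left hs
  -- limits
  have hts : Tendsto (fun n => t n ^ 2 / 2) atTop (nhds 0) := by
    have := (ht.mul ht).div_const 2
    simpa [pow_two] using this
  have l1 : Tendsto (fun n => T abar (z n).2 v) atTop (nhds (T abar δ2u v)) :=
    ((cont2 abar v).tendsto _).comp hz2
  have l2 : Tendsto (fun n => T (z n).1 ubar v) atTop (nhds (T δat ubar v)) :=
    ((cont1 ubar v).tendsto _).comp hz1
  have l4 : Tendsto (fun n => t n * T δa (z n).2 v) atTop (nhds 0) := by
    have := ht.mul (((cont2 δa v).tendsto _).comp hz2)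
    simpa using this
  have l5 : Tendsto (fun n => t n * T (z n).1 δu v) atTop (nhds 0) := by
    have := ht.mul (((cont1 δu v).tendsto _).comp hz1)
    simpa using this
  have l6 : Tendsto (fun n => (t n ^ 2 / 2) * T (z n).1 (z n).2 v) atTop (nhds 0) := by
    apply squeeze_zero_norm (a := fun n => (t n ^ 2 / 2) * (β * ‖(z n).1‖ * ‖(z n).2‖ * ‖v‖))
    · intro n
      rw [Real.norm_eq_abs, abs_mul, abs_of_pos (by have := htpos n; positivity : (0:ℝ) < t n ^ 2 / 2)]
      exact mul_le_mul_of_nonneg_left (hTb _ _ _) (by positivity)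
    · have hb : Tendsto (fun n => β * ‖(z n).1‖ * ‖(z n).2‖ * ‖v‖) atTop
          (nhds (β * ‖δat‖ * ‖δ2u‖ * ‖v‖)) :=
        (((tendsto_const_nhds.mul (hz1.norm)).mul (hz2.norm)).mul tendsto_const_nhds)
      simpa using hts.mul hb
  have lg : Tendsto g atTop (nhds (T abar δ2u v + T δat ubar v + 2 * T δa δu v + 0 + 0 + 0)) :=
    ((((l1.add l2).add tendsto_const_nhds).add l4).add l5).add l6
  have lg0 : Tendsto g atTop (nhds 0) := by
    have : g = fun _ => (0:ℝ) := funext hg0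
    rw [this]
    exact tendsto_const_nhds
  have := tendsto_nhds_unique lg lg0
  linarith
end

section
/- Under coercivity, the second derivative δ²u = D²u(a)(δa₁, δa₂), characterized as the unique solution of T(a, δ²u, v) = −T(δa₂, δu₁, v) − T(δa₁, δu₂, v) for all v ∈ V (where δuᵢ solves T(a, δuᵢ, v) = −T(δaᵢ, u(a), v)), satisfies the bound ‖δ²u‖ ≤ (2β²/α²)‖u(a)‖·‖δa₁‖·‖δa₂‖ when δa₁ = δa₂ = δa, i.e., ‖δ²u‖ ≤ (2β²/α²)‖u(a)‖‖δa‖². -/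
lemma norm_bound_aux {V : Type*} [NormedAddCommGroup V] {α C : ℝ} (hα : 0 < α)
    (hC : 0 ≤ C) (w : V) (h : α * ‖w‖ ^ 2 ≤ C * ‖w‖) : ‖w‖ ≤ C / α := by
  rcases eq_or_ne w 0 with hw | hw
  · simp [hw]; positivity
  · have hn : 0 < ‖w‖ := norm_pos_iff.mpr hw
    rw [le_div_iff₀ hα]
    nlinarith

/-- Under coercivity at `a`, the second derivative
`δ²u = D²u(a)(δa,δa)`, characterized by `T(a,δ²u,v) = −2T(δa,δu,v)`, satisfies
`‖δ²u‖ ≤ (2β²/α²)‖u(a)‖‖δa‖²`. -/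
theorem second_derivative_bound
    {B V : Type*} [NormedAddCommGroup B] [NormedSpace ℝ B]
    [NormedAddCommGroup V] [InnerProductSpace ℝ V]
    (T : B → V → V → ℝ) (m : V →L[ℝ] ℝ)
    (α β : ℝ) (hα : 0 < α) (hβ : 0 < β)
    (hT1 : ∀ u v, IsLinearMap ℝ (fun a => T a u v))
    (hT2 : ∀ a v, IsLinearMap ℝ (fun u => T a u v))
    (hT3 : ∀ a u, IsLinearMap ℝ (fun v => T a u v))
    (hTsym : ∀ a u v, T a u v = T a v u)
    (hTb : ∀ (a : B) (u v : V), |T a u v| ≤ β * ‖a‖ * ‖u‖ * ‖v‖)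
    (a : B)
    (hTc : ∀ w : V, α * ‖w‖ ^ 2 ≤ T a w w)
    (ua : V) (hua : ∀ v : V, T a ua v = m v)
    (δa : B) (δu : V)
    (hδu : ∀ v : V, T a δu v = -(T δa ua v))
    (δ2u : V)
    (hδ2u : ∀ v : V, T a δ2u v = -(2 * T δa δu v)) :
    ‖δ2u‖ ≤ 2 * β ^ 2 / α ^ 2 * ‖ua‖ * ‖δa‖ ^ 2 := by
  have hδu_bd : ‖δu‖ ≤ β * ‖δa‖ * ‖ua‖ / α := by
    apply norm_bound_aux hα (by positivity)
    calc α * ‖δu‖ ^ 2 ≤ T a δu δu := hTc δu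
      _ = -(T δa ua δu) := hδu δu
      _ ≤ |T δa ua δu| := neg_le_abs _
      _ ≤ β * ‖δa‖ * ‖ua‖ * ‖δu‖ := hTb _ _ _
  have h2 : ‖δ2u‖ ≤ 2 * β * ‖δa‖ * ‖δu‖ / α := by
    apply norm_bound_aux hα (by positivity)
    calc α * ‖δ2u‖ ^ 2 ≤ T a δ2u δ2u := hTc δ2u
      _ = -(2 * T δa δu δ2u) := hδ2u δ2u
      _ ≤ 2 * |T δa δu δ2u| := by
          rw [neg_mul_eq_mul_neg]
          exact mul_le_mul_of_nonneg_left (neg_le_abs _) (by norm_num)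
      _ ≤ 2 * (β * ‖δa‖ * ‖δu‖ * ‖δ2u‖) :=
          mul_le_mul_of_nonneg_left (hTb _ _ _) (by norm_num)
      _ = 2 * β * ‖δa‖ * ‖δu‖ * ‖δ2u‖ := by ring
  have hδa : (0:ℝ) ≤ ‖δa‖ := norm_nonneg _
  have hkey : 2 * β * ‖δa‖ * ‖δu‖ / α ≤ 2 * β ^ 2 / α ^ 2 * ‖ua‖ * ‖δa‖ ^ 2 := by
    rw [div_le_iff₀ hα]
    have h1 : 2 * β * ‖δa‖ * ‖δu‖ ≤ 2 * β * ‖δa‖ * (β * ‖δa‖ * ‖ua‖ / α) := by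
      apply mul_le_mul_of_nonneg_left hδu_bd (by positivity)
    calc 2 * β * ‖δa‖ * ‖δu‖ ≤ 2 * β * ‖δa‖ * (β * ‖δa‖ * ‖ua‖ / α) := h1
      _ = 2 * β ^ 2 / α ^ 2 * ‖ua‖ * ‖δa‖ ^ 2 * α := by field_simp
  exact h2.trans hkey
end

section
/- Assume uₑ(a) solves the regularized problem Tₜ(a,uₑ(a),v) + ε S(uₑ(a),v) = mᵥ(v) + ε ℓ(v) for all v, and ũ solves T(a,ũ,v) = m(v) for all v. If Tₜ(a,w,w) ≥ 0 for all w, S is coercive with constant α₀ and bounded with constant β₀, |Tₜ − T| ≤ τ‖a‖‖u‖‖v‖, and ‖mᵥ − m‖ ≤ ν, then ε α₀ ‖uₑ(a) − ũ‖² ≤ ε β₀ ‖ũ‖·‖uₑ(a) − ũ‖ + τ‖a‖‖ũ‖·‖uₑ(a) − ũ‖ + ν‖uₑ(a) − ũ‖ + ε‖ℓ‖·‖uₑ(a) − ũ‖; consequently ‖uₑ(a) − ũ‖ ≤ (β₀/α₀)‖ũ‖ + (τ/(α₀ε))‖a‖‖ũ‖ + ν/(α₀ε) + ‖ℓ‖/α₀,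 so the regularized solutions are bounded whenever τ/ε and ν/ε are bounded. -/
/-- Boundedness of regularized solutions: the regularized
solution `uₑ(a)` and any solution `ũ` of the unperturbed problem satisfy the
stated energy estimate and the resulting bound on `‖uₑ(a) − ũ‖`. -/
theorem regularized_solution_bound
    {B V : Type*} [NormedAddCommGroup B] [NormedSpace ℝ B]
    [NormedAddCommGroup V] [InnerProductSpace ℝ V]
    (T Tt : B → V → V → ℝ) (S : V → V → ℝ)
    (m mv l : V →L[ℝ] ℝ)
    (α₀ β₀ τ ν ε : ℝ) (hα₀ : 0 < α₀) (hβ₀ : 0 < β₀)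
    (hτ : 0 < τ) (hν : 0 < ν) (hε : 0 < ε)
    (hmv : ‖mv - m‖ ≤ ν)
    (hT1 : ∀ u v, IsLinearMap ℝ (fun a => T a u v))
    (hT2 : ∀ a v, IsLinearMap ℝ (fun u => T a u v))
    (hT3 : ∀ a u, IsLinearMap ℝ (fun v => T a u v))
    (hTsym : ∀ a u v, T a u v = T a v u)
    (hTt1 : ∀ u v, IsLinearMap ℝ (fun a => Tt a u v))
    (hTt2 : ∀ a v, IsLinearMap ℝ (fun u => Tt a u v))
    (hTt3 : ∀ a u, IsLinearMap ℝ (fun v => Tt a u v))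
    (hTtsym : ∀ a u v, Tt a u v = Tt a v u)
    (hTdiff : ∀ (a : B) (u v : V), |Tt a u v - T a u v| ≤ τ * ‖a‖ * ‖u‖ * ‖v‖)
    (hS1 : ∀ v, IsLinearMap ℝ (fun u => S u v))
    (hS2 : ∀ u, IsLinearMap ℝ (fun v => S u v))
    (hSsym : ∀ u v, S u v = S v u)
    (hSb : ∀ u v : V, |S u v| ≤ β₀ * ‖u‖ * ‖v‖)
    (hSc : ∀ u : V, α₀ * ‖u‖ ^ 2 ≤ S u u)
    (a : B)
    (hTtpos : ∀ w : V, 0 ≤ Tt a w w)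
    (utld : V) (hutld : ∀ v : V, T a utld v = m v)
    (ue : V) (hue : ∀ v : V, Tt a ue v + ε * S ue v = mv v + ε * l v) :
    ε * α₀ * ‖ue - utld‖ ^ 2 ≤
        ε * β₀ * ‖utld‖ * ‖ue - utld‖ + τ * ‖a‖ * ‖utld‖ * ‖ue - utld‖ +
          ν * ‖ue - utld‖ + ε * ‖l‖ * ‖ue - utld‖ ∧
      ‖ue - utld‖ ≤
        β₀ / α₀ * ‖utld‖ + τ / (α₀ * ε) * ‖a‖ * ‖utld‖ + ν / (α₀ * ε) +
          ‖l‖ / α₀ := by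
  set e := ue - utld with he
  have hue' : ue = e + utld := by simp [he]
  have hTtsplit : Tt a ue e = Tt a e e + Tt a utld e := by
    rw [hue']; exact (hTt2 a e).map_add e utld
  have hSsplit : S ue e = S e e + S utld e := by
    rw [hue']; exact (hS1 e).map_add e utld
  have heq : Tt a e e + ε * S e e
      = (mv e - m e) + ε * l e - (Tt a utld e - T a utld e) - ε * S utld e := by
    have h1 := hue e
    have h2 := hutld e
    rw [hTtsplit, hSsplit] at h1
    linarith
  have hb1 : mv e - m e ≤ ν * ‖e‖ := by
    have h := (mv - m).le_opNorm e
    have h2 : (mv - m) e = mv e - m e := rfl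
    rw [h2] at h
    calc mv e - m e ≤ |mv e - m e| := le_abs_self _
      _ ≤ ‖mv - m‖ * ‖e‖ := h
      _ ≤ ν * ‖e‖ := by nlinarith [norm_nonneg e]
  have hb2 : l e ≤ ‖l‖ * ‖e‖ := le_trans (le_abs_self _) (l.le_opNorm e)
  have hb3 : -(Tt a utld e - T a utld e) ≤ τ * ‖a‖ * ‖utld‖ * ‖e‖ := by
    have := abs_le.mp (hTdiff a utld e); linarith
  have hb4 : -S utld e ≤ β₀ * ‖utld‖ * ‖e‖ := by
    have := abs_le.mp (hSb utld e); linarith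
  have hcoer := hSc e
  have hpos := hTtpos e
  have part1 : ε * α₀ * ‖e‖ ^ 2 ≤
      ε * β₀ * ‖utld‖ * ‖e‖ + τ * ‖a‖ * ‖utld‖ * ‖e‖ + ν * ‖e‖ + ε * ‖l‖ * ‖e‖ := by
    nlinarith [hcoer, heq, hpos, hb1, hb2, hb3, hb4, hε.le]
  refine ⟨part1, ?_⟩
  rcases eq_or_lt_of_le (norm_nonneg e) with h0 | h0
  · rw [← h0]
    positivity
  · have hkey : (β₀ / α₀ * ‖utld‖ + τ / (α₀ * ε) * ‖a‖ * ‖utld‖ + ν / (α₀ * ε) +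
        ‖l‖ / α₀) * (α₀ * ε) = ε * β₀ * ‖utld‖ + τ * ‖a‖ * ‖utld‖ + ν + ε * ‖l‖ := by
      field_simp
    have hαε : 0 < α₀ * ε := mul_pos hα₀ hε
    refine le_of_mul_le_mul_right ?_ hαε
    rw [hkey]
    nlinarith [part1, h0]
end

section
/- The derivative of the regularized MOLS functional Jₑ(a) = ½Tₜ(a, uₑ(a)−z, uₑ(a)−z) + (ε/2)S(uₑ(a)−z, uₑ(a)−z) in direction δa equals −½ Tₜ(δa, uₑ(a)+z, uₑ(a)−z), where uₑ(a) solves the regularized variational problem and Duₑ(a)δa solves Tₜ(a, Duₑ(a)δa, v) + ε S(Duₑ(a)δa, v) = −Tₜ(δa, uₑ(a), v) for all v. -/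
/-- The derivative of the regularized MOLS functional in
direction `δa`, given via the chain rule as
`½Tₜ(δa, uₑ−z, uₑ−z) + Tₜ(a, Duₑδa, uₑ−z) + ε S(Duₑδa, uₑ−z)`, equals
`−½ Tₜ(δa, uₑ+z, uₑ−z)`. -/
theorem mols_derivative_formula
    {B V : Type*} [NormedAddCommGroup B] [NormedSpace ℝ B]
    [NormedAddCommGroup V] [InnerProductSpace ℝ V]
    (Tt : B → V → V → ℝ) (S : V → V → ℝ)
    (m l : V →L[ℝ] ℝ) (z : V) (ε : ℝ) (hε : 0 < ε)
    (hTt1 : ∀ u v, IsLinearMap ℝ (fun a => Tt a u v))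
    (hTt2 : ∀ a v, IsLinearMap ℝ (fun u => Tt a u v))
    (hTt3 : ∀ a u, IsLinearMap ℝ (fun v => Tt a u v))
    (hTtsym : ∀ a u v, Tt a u v = Tt a v u)
    (hS1 : ∀ v, IsLinearMap ℝ (fun u => S u v))
    (hS2 : ∀ u, IsLinearMap ℝ (fun v => S u v))
    (hSsym : ∀ u v, S u v = S v u)
    (a : B)
    (ue : V) (hue : ∀ v : V, Tt a ue v + ε * S ue v = m v + ε * l v)
    (δa : B) (du : V)
    (hdu : ∀ v : V, Tt a du v + ε * S du v = -(Tt δa ue v)) :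
    1 / 2 * Tt δa (ue - z) (ue - z) + Tt a du (ue - z) + ε * S du (ue - z) =
      -(1 / 2) * Tt δa (ue + z) (ue - z) := by
  have h := hdu (ue - z)
  have h1 : Tt δa (ue - z) (ue - z) = Tt δa ue (ue - z) - Tt δa z (ue - z) :=
    (hTt2 δa (ue - z)).map_sub ue z
  have h2 : Tt δa (ue + z) (ue - z) = Tt δa ue (ue - z) + Tt δa z (ue - z) :=
    (hTt2 δa (ue - z)).map_add ue z
  linarith
end

section
/- The second derivative of the regularized MOLS functional satisfies D²Jₑ(a)(δa,δa) = Tₜ(a, Duₑ(a)δa, Duₑ(a)δa) + ε S(Duₑ(a)δa, Duₑ(a)δa); in particular, if Tₜ(a,w,w) ≥ 0 for all w and S(w,w) ≥ α₀‖w‖², then D²Jₑ(a)(δa,δa) ≥ ε α₀ ‖Duₑ(a)δa‖² ≥ 0, so the regularized MOLS functional is convex on convex subsets of parameters where these conditions hold. -/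
/-- The second derivative of the regularized MOLS functional,
obtained by differentiating `DJₑ(a)δa = −½Tₜ(δa, uₑ+z, uₑ−z)` once more, i.e.
`−½Tₜ(δa, Duₑδa, uₑ−z) − ½Tₜ(δa, uₑ+z, Duₑδa)`, equals
`Tₜ(a, Duₑδa, Duₑδa) + ε S(Duₑδa, Duₑδa)`; in particular, with positivity of
`Tₜ` and coercivity of `S` it is bounded below by `ε α₀ ‖Duₑδa‖² ≥ 0`, so the
regularized MOLS functional is convex. -/
theorem mols_second_derivative_and_convexity
    {B V : Type*} [NormedAddCommGroup B] [NormedSpace ℝ B]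
    [NormedAddCommGroup V] [InnerProductSpace ℝ V]
    (Tt : B → V → V → ℝ) (S : V → V → ℝ)
    (m l : V →L[ℝ] ℝ) (z : V) (α₀ ε : ℝ) (hα₀ : 0 < α₀) (hε : 0 < ε)
    (hTt1 : ∀ u v, IsLinearMap ℝ (fun a => Tt a u v))
    (hTt2 : ∀ a v, IsLinearMap ℝ (fun u => Tt a u v))
    (hTt3 : ∀ a u, IsLinearMap ℝ (fun v => Tt a u v))
    (hTtsym : ∀ a u v, Tt a u v = Tt a v u)
    (hS1 : ∀ v, IsLinearMap ℝ (fun u => S u v))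
    (hS2 : ∀ u, IsLinearMap ℝ (fun v => S u v))
    (hSsym : ∀ u v, S u v = S v u)
    (hSc : ∀ w : V, α₀ * ‖w‖ ^ 2 ≤ S w w)
    (a : B)
    (hTtpos : ∀ w : V, 0 ≤ Tt a w w)
    (ue : V) (hue : ∀ v : V, Tt a ue v + ε * S ue v = m v + ε * l v)
    (δa : B) (du : V)
    (hdu : ∀ v : V, Tt a du v + ε * S du v = -(Tt δa ue v)) :
    -(1 / 2) * Tt δa du (ue - z) + -(1 / 2) * Tt δa (ue + z) du =
        Tt a du du + ε * S du du ∧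
      ε * α₀ * ‖du‖ ^ 2 ≤ Tt a du du + ε * S du du ∧
      0 ≤ Tt a du du + ε * S du du := by
  have hlin3 := hTt3 δa du
  have h1 : Tt δa du (ue - z) = Tt δa du ue - Tt δa du z := by
    have := hlin3.map_add (ue) (-z)
    simpa [sub_eq_add_neg, hlin3.map_neg] using this
  have h2 : Tt δa (ue + z) du = Tt δa du ue + Tt δa du z := by
    rw [hTtsym δa (ue + z) du]
    exact (hTt3 δa du).map_add ue z
  have key : -(1 / 2) * Tt δa du (ue - z) + -(1 / 2) * Tt δa (ue + z) du
      = -(Tt δa ue du) := by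
    rw [h1, h2, hTtsym δa ue du]; ring
  have heq : -(1 / 2) * Tt δa du (ue - z) + -(1 / 2) * Tt δa (ue + z) du
      = Tt a du du + ε * S du du := by
    rw [key, ← hdu du]
  refine ⟨heq, ?_, ?_⟩
  · have h3 := hSc du
    have h4 := hTtpos du
    nlinarith
  · have h3 := hSc du
    have h4 := hTtpos du
    nlinarith [mul_le_mul_of_nonneg_left h3 hε.le,
      mul_nonneg hα₀.le (sq_nonneg ‖du‖)]
end

section
/- Let p solve the adjoint equation Tₜ(a, p, v) + ε S(p, v) = ⟨z − uₑ(a), v⟩_Z for all v ∈ V, where uₑ(a) solves the regularized problem and Duₑ(a)δa solves Tₜ(a, Duₑ(a)δa, v) + ε S(Duₑ(a)δa, v) = −Tₜ(δa, uₑ(a), v). Then the derivative of the regularized OLS functional Ĵ(a) = ½‖uₑ(a) − z‖²_Z + κR(a) in direction δa equals κ DR(a)δa + Tₜ(δa, uₑ(a), p); i.e., the gradient can be computed without differentiating the solution map in each direction. -/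
open scoped RealInnerProductSpace

/-- First-order adjoint representation of the derivative of the
regularized OLS functional: with `p` solving the adjoint equation, the
chain-rule derivative `⟨Duₑδa, uₑ − z⟩_Z + κ DR(a)δa` equals
`κ DR(a)δa + Tₜ(δa, uₑ, p)`. -/
theorem ols_adjoint_gradient
    {B V Z : Type*} [NormedAddCommGroup B] [NormedSpace ℝ B]
    [NormedAddCommGroup V] [InnerProductSpace ℝ V]
    [NormedAddCommGroup Z] [InnerProductSpace ℝ Z]
    (ι : V →L[ℝ] Z)  -- continuous embedding of V into Z
    (Tt : B → V → V → ℝ) (S : V → V → ℝ)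
    (m l : V →L[ℝ] ℝ) (z : Z) (ε κ : ℝ) (hε : 0 < ε) (hκ : 0 < κ)
    (hTt1 : ∀ u v, IsLinearMap ℝ (fun a => Tt a u v))
    (hTt2 : ∀ a v, IsLinearMap ℝ (fun u => Tt a u v))
    (hTt3 : ∀ a u, IsLinearMap ℝ (fun v => Tt a u v))
    (hTtsym : ∀ a u v, Tt a u v = Tt a v u)
    (hS1 : ∀ v, IsLinearMap ℝ (fun u => S u v))
    (hS2 : ∀ u, IsLinearMap ℝ (fun v => S u v))
    (hSsym : ∀ u v, S u v = S v u)
    (a : B)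
    (ue : V) (hue : ∀ v : V, Tt a ue v + ε * S ue v = m v + ε * l v)
    (δa : B) (du : V)
    (hdu : ∀ v : V, Tt a du v + ε * S du v = -(Tt δa ue v))
    (p : V) (hp : ∀ v : V, Tt a p v + ε * S p v = ⟪z - ι ue, ι v⟫)
    (dR : ℝ)  -- the value DR(a)(δa) of the derivative of the regularizer
    :
    ⟪ι du, ι ue - z⟫ + κ * dR = κ * dR + Tt δa ue p := by
  have h1 : ⟪ι du, ι ue - z⟫ = -(Tt a p du + ε * S p du) := by
    rw [hp du, real_inner_comm]
    rw [show (ι ue - z : Z) = -(z - ι ue) by abel, inner_neg_left]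
  have h2 := hdu p
  rw [h1, hTtsym a p du, hSsym p du, h2]
  ring
end

section
/- With p the adjoint state solving Tₜ(a,p,v) + εS(p,v) = ⟨z − uₑ(a), v⟩_Z for all v, the second derivative of the regularized OLS functional satisfies D²Ĵ(a)(δa,δa) = κ D²R(a)(δa,δa) + ⟨Duₑ(a)δa, Duₑ(a)δa⟩_Z + 2Tₜ(δa, Duₑ(a)δa, p), assuming the second derivative D²uₑ(a)(δa,δa) is characterized by Tₜ(a, D²uₑ(a)(δa,δa), v) + εS(D²uₑ(a)(δa,δa), v) = −2Tₜ(δa, Duₑ(a)δa, v) for all v ∈ V. -/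
open scoped RealInnerProductSpace

/-- Second-order adjoint representation of the Hessian of the
regularized OLS functional: with `p` the adjoint state, the chain-rule second
derivative `⟨D²uₑ(δa,δa), uₑ − z⟩_Z + ⟨Duₑδa, Duₑδa⟩_Z + κ D²R(a)(δa,δa)`
equals `κ D²R(a)(δa,δa) + ⟨Duₑδa, Duₑδa⟩_Z + 2Tₜ(δa, Duₑδa, p)`. -/
theorem ols_adjoint_hessian
    {B V Z : Type*} [NormedAddCommGroup B] [NormedSpace ℝ B]
    [NormedAddCommGroup V] [InnerProductSpace ℝ V]
    [NormedAddCommGroup Z] [InnerProductSpace ℝ Z]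
    (ι : V →L[ℝ] Z)  -- continuous embedding of V into Z
    (Tt : B → V → V → ℝ) (S : V → V → ℝ)
    (m l : V →L[ℝ] ℝ) (z : Z) (ε κ : ℝ) (hε : 0 < ε) (hκ : 0 < κ)
    (hTt1 : ∀ u v, IsLinearMap ℝ (fun a => Tt a u v))
    (hTt2 : ∀ a v, IsLinearMap ℝ (fun u => Tt a u v))
    (hTt3 : ∀ a u, IsLinearMap ℝ (fun v => Tt a u v))
    (hTtsym : ∀ a u v, Tt a u v = Tt a v u)
    (hS1 : ∀ v, IsLinearMap ℝ (fun u => S u v))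
    (hS2 : ∀ u, IsLinearMap ℝ (fun v => S u v))
    (hSsym : ∀ u v, S u v = S v u)
    (a : B)
    (ue : V) (hue : ∀ v : V, Tt a ue v + ε * S ue v = m v + ε * l v)
    (δa : B) (du : V)
    (hdu : ∀ v : V, Tt a du v + ε * S du v = -(Tt δa ue v))
    (d2u : V)
    (hd2u : ∀ v : V, Tt a d2u v + ε * S d2u v = -(2 * Tt δa du v))
    (p : V) (hp : ∀ v : V, Tt a p v + ε * S p v = ⟪z - ι ue, ι v⟫)
    (d2R : ℝ)  -- the value D²R(a)(δa,δa)
    :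
    ⟪ι d2u, ι ue - z⟫ + ⟪ι du, ι du⟫ + κ * d2R =
      κ * d2R + ⟪ι du, ι du⟫ + 2 * Tt δa du p := by
  have h1 : ⟪ι d2u, ι ue - z⟫ = -⟪z - ι ue, ι d2u⟫ := by
    rw [real_inner_comm, ← inner_neg_left, neg_sub]
  have h2 := hp d2u
  have h3 := hd2u p
  rw [hTtsym a d2u p, hSsym d2u p] at h3
  linarith
end
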